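/- Define a_k = ∫ over the simplex 0 ≤ τ₁ ≤ ⋯ ≤ τ_k ≤ s of ∏_{i=1}^k (1−ψ̃(τᵢ)) λ̄^k e^{−λ̄ τ_k} dτ for a measurable function ψ̃ : [0,s] → [0,1] and a₀ = 1. Then a_k → 0 as k → ∞, and Σ_{m=1}^∞ [a_{m−1} − a_m − e^{−λ̄ s}·(1/(m−1)!)·(λ̄ ∫₀^s (1−ψ̃(τ))dτ)^{m−1}] = 1 − exp(−∫₀^s λ̄ ψ̃(τ) dτ). -/

import Mathlib

/-!
On the ordered simplex the integrand is bounded by `λ̄ ^ k`, and the simplex has volume at most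
`s ^ k / k!`: its `k!` images under permutations of the coordinates lie in the cube `[0, s] ^ k`
and are disjoint up to the null set of points with two equal coordinates. Hence
`|a_k| ≤ (λ̄ s) ^ k / k!`, so `(a_k)` is summable and tends to `0`. The differences
`a_{m-1} - a_m` then telescope to `a_0 = 1`, and the remaining terms form `e^{-λ̄ s}` times the
exponential series of `λ̄ ∫₀ˢ (1 - ψ̃) = λ̄ s - ∫₀ˢ λ̄ ψ̃`.
-/

open MeasureTheory intervalIntegral

/-- `a_0 = 1` and, for `k ≥ 1`,
`a_k = ∫_{0≤τ₁≤⋯≤τ_k≤s} ∏_{i=1}^k (1−ψ̃(τᵢ)) · λ̄^k e^{−λ̄ τ_k} dτ`. -/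
noncomputable def aSeq (ψ : ℝ → ℝ) (lam s : ℝ) : ℕ → ℝ
  | 0 => 1
  | k + 1 =>
    ∫ τ in {τ : Fin (k + 1) → ℝ | 0 ≤ τ 0 ∧ Monotone τ ∧ τ (Fin.last k) ≤ s},
      (∏ i : Fin (k + 1), (1 - ψ (τ i))) * lam ^ (k + 1) * Real.exp (-lam * τ (Fin.last k))

open Set Filter Nat Function

theorem volume_setOf_apply_eq_apply {ι : Type*} [Fintype ι] {i j : ι} (hij : i ≠ j) :
    volume {τ : ι → ℝ | τ i = τ j} = 0 := by
  classical
  let L : (ι → ℝ) →ₗ[ℝ] ℝ := (LinearMap.proj i : (ι → ℝ) →ₗ[ℝ] ℝ) - LinearMap.proj j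
  have hker : {τ : ι → ℝ | τ i = τ j} = LinearMap.ker L := by
    ext τ; simp [L, sub_eq_zero]
  rw [hker]
  refine Measure.addHaar_submodule _ _ fun htop => ?_
  have : Pi.single i (1 : ℝ) ∈ LinearMap.ker L := htop ▸ Submodule.mem_top
  simp [L, Pi.single_eq_of_ne hij.symm] at this

theorem ae_injective {ι : Type*} [Fintype ι] : ∀ᵐ τ : ι → ℝ, Injective τ := by
  have hnull : volume (⋃ (i : ι) (j : ι) (_ : i ≠ j), {τ : ι → ℝ | τ i = τ j}) = 0 :=
    measure_iUnion_null fun i => measure_iUnion_null fun j => measure_iUnion_null fun hij =>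
      volume_setOf_apply_eq_apply hij
  refine measure_mono_null (fun τ hτ => ?_) hnull
  obtain ⟨i, j, hτij, hij⟩ : ∃ i j, τ i = τ j ∧ i ≠ j := by
    simpa [Injective] using hτ
  exact mem_iUnion₂.2 ⟨i, j, mem_iUnion.2 ⟨hij, hτij⟩⟩

theorem Equiv.Perm.eq_of_strictMono_comp {ι α : Type*} [LinearOrder ι] [WellFoundedLT ι]
    [Preorder α] {τ : ι → α} {σ σ' : Equiv.Perm ι} (h : StrictMono (τ ∘ σ))
    (h' : StrictMono (τ ∘ σ')) : σ = σ' := by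
  have hτ : Injective τ := by
    simpa [comp_def] using h.injective.comp σ.symm.injective
  have hrange : range (τ ∘ σ) = range (τ ∘ σ') := by
    rw [range_comp, range_comp, σ.range_eq_univ, σ'.range_eq_univ]
  exact Equiv.ext fun i => hτ (congrFun ((h.range_inj h').1 hrange) i)

theorem measurableSet_setOf_strictMono {ι : Type*} [Fintype ι] [LinearOrder ι] :
    MeasurableSet {τ : ι → ℝ | StrictMono τ} := by
  have : {τ : ι → ℝ | StrictMono τ} = ⋂ (i) (j) (_ : i < j), {τ | τ i < τ j} := by
    ext τ; simp [StrictMono]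
  rw [this]
  exact .iInter fun i => .iInter fun j => .iInter fun _ =>
    measurableSet_lt (measurable_pi_apply i) (measurable_pi_apply j)

theorem volume_preimage_comp_perm {ι : Type*} [Fintype ι] (σ : Equiv.Perm ι)
    {S : Set (ι → ℝ)} (hS : MeasurableSet S) :
    volume ((· ∘ σ) ⁻¹' S) = volume S := by
  have h := (volume_measurePreserving_piCongrLeft (fun _ : ι => ℝ) σ.symm).measure_preimage
    hS.nullMeasurableSet
  convert h using 3
  ext τ i
  simpa [MeasurableEquiv.coe_piCongrLeft] using
    (Equiv.piCongrLeft_apply_apply (fun _ : ι => ℝ) σ.symm τ (σ i)).symm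

theorem factorial_mul_volume_strictMono_inter_pi_le (n : ℕ) {A : Set ℝ}
    (hA : MeasurableSet A) :
    n ! * volume ({τ : Fin n → ℝ | StrictMono τ} ∩ univ.pi fun _ => A) ≤ volume A ^ n := by
  set S := {τ : Fin n → ℝ | StrictMono τ} ∩ univ.pi fun _ => A
  have hS : MeasurableSet S := measurableSet_setOf_strictMono.inter (.univ_pi fun _ => hA)
  set T : Equiv.Perm (Fin n) → Set (Fin n → ℝ) := fun σ => (· ∘ σ) ⁻¹' S
  have hdisj : Pairwise (Disjoint on T) := fun σ σ' hne =>
    disjoint_left.2 fun _ hσ hσ' => hne (Equiv.Perm.eq_of_strictMono_comp hσ.1 hσ'.1)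
  have hT : ∀ σ, MeasurableSet (T σ) := fun σ => hS.preimage (by fun_prop)
  have hsub : ⋃ σ, T σ ⊆ univ.pi fun _ => A :=
    iUnion_subset fun σ τ hτ i _ => by simpa using hτ.2 (σ.symm i) trivial
  calc (n ! : ENNReal) * volume S = ∑' σ, volume (T σ) := by
        simp [T, tsum_fintype, volume_preimage_comp_perm _ hS, Fintype.card_perm]
    _ = volume (⋃ σ, T σ) := (measure_iUnion hdisj hT).symm
    _ ≤ volume (univ.pi fun _ : Fin n => A) := measure_mono hsub
    _ = volume A ^ n := by simp [volume_pi_pi]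

theorem factorial_mul_volume_monotone_inter_pi_le (n : ℕ) {A : Set ℝ} (hA : MeasurableSet A) :
    n ! * volume ({τ : Fin n → ℝ | Monotone τ} ∩ univ.pi fun _ => A) ≤ volume A ^ n := by
  refine le_trans ?_ (factorial_mul_volume_strictMono_inter_pi_le n hA)
  gcongr 1
  refine measure_mono_ae ?_
  filter_upwards [ae_injective] with τ hτ ⟨hmono, hτA⟩
  exact ⟨hmono.strictMono_of_injective hτ, hτA⟩

theorem volume_monotone_inter_pi_Icc_le (n : ℕ) {s : ℝ} (hs : 0 ≤ s) :
    volume ({τ : Fin n → ℝ | Monotone τ} ∩ univ.pi fun _ => Icc 0 s) ≤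
      ENNReal.ofReal (s ^ n / n !) := by
  have h := factorial_mul_volume_monotone_inter_pi_le n (measurableSet_Icc (a := 0) (b := s))
  rw [Real.volume_Icc, sub_zero, ← ENNReal.ofReal_pow hs] at h
  rw [ENNReal.ofReal_div_of_pos (by positivity), ENNReal.ofReal_natCast,
    ENNReal.le_div_iff_mul_le (.inl (by positivity)) (.inl (ENNReal.natCast_ne_top _)), mul_comm]
  exact h

theorem simplex_subset_monotone_inter_pi_Icc (k : ℕ) (s : ℝ) :
    {τ : Fin (k + 1) → ℝ | 0 ≤ τ 0 ∧ Monotone τ ∧ τ (Fin.last k) ≤ s} ⊆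
      {τ | Monotone τ} ∩ univ.pi fun _ => Icc 0 s :=
  fun _ ⟨h0, hmono, hs⟩ => ⟨hmono, fun i _ =>
    ⟨h0.trans (hmono (Fin.zero_le i)), (hmono (Fin.le_last i)).trans hs⟩⟩

theorem norm_prod_one_sub_mul_pow_mul_exp_le {ι : Type*} [Fintype ι] {ψ : ℝ → ℝ}
    {lam s t : ℝ} (hψ : ∀ x ∈ Icc 0 s, ψ x ∈ Icc 0 1) (hlam : 0 ≤ lam) (ht : 0 ≤ t)
    (n : ℕ) {τ : ι → ℝ} (hτ : ∀ i, τ i ∈ Icc 0 s) :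
    ‖(∏ i, (1 - ψ (τ i))) * lam ^ n * Real.exp (-lam * t)‖ ≤ lam ^ n := by
  have hprod : ∏ i, (1 - ψ (τ i)) ∈ Icc (0 : ℝ) 1 := by
    have h := fun i => hψ _ (hτ i)
    exact ⟨Finset.prod_nonneg fun i _ => by linarith [(h i).2],
      Finset.prod_le_one (fun i _ => by linarith [(h i).2]) fun i _ => by linarith [(h i).1]⟩
  have hexp : Real.exp (-lam * t) ≤ 1 := Real.exp_le_one_iff.2 (by nlinarith)
  rw [Real.norm_eq_abs, abs_of_nonneg (by have := hprod.1; positivity)]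
  calc (∏ i, (1 - ψ (τ i))) * lam ^ n * Real.exp (-lam * t) ≤ 1 * lam ^ n * 1 := by
        gcongr
        exact hprod.2
    _ = lam ^ n := by ring

theorem norm_aSeq_le {ψ : ℝ → ℝ} {lam s : ℝ} (hlam : 0 ≤ lam) (hs : 0 ≤ s)
    (hψ : ∀ x ∈ Icc 0 s, ψ x ∈ Icc 0 1) (k : ℕ) :
    ‖aSeq ψ lam s k‖ ≤ (lam * s) ^ k / k ! := by
  cases k with
  | zero => simp [aSeq]
  | succ k =>
    set S := {τ : Fin (k + 1) → ℝ | 0 ≤ τ 0 ∧ Monotone τ ∧ τ (Fin.last k) ≤ s}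
    have hsub := simplex_subset_monotone_inter_pi_Icc k s
    have hvol : volume S ≤ ENNReal.ofReal (s ^ (k + 1) / (k + 1) !) :=
      (measure_mono hsub).trans (volume_monotone_inter_pi_Icc_le (k + 1) hs)
    calc ‖aSeq ψ lam s (k + 1)‖ ≤ lam ^ (k + 1) * volume.real S :=
          norm_setIntegral_le_of_norm_le_const (hvol.trans_lt ENNReal.ofReal_lt_top) fun τ hτ =>
            have hτs : ∀ i, τ i ∈ Icc 0 s := fun i => (hsub hτ).2 i trivial
            norm_prod_one_sub_mul_pow_mul_exp_le hψ hlam (hτs _).1 _ hτs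
      _ ≤ lam ^ (k + 1) * (s ^ (k + 1) / (k + 1) !) := by
          gcongr
          exact ENNReal.toReal_le_of_le_ofReal (by positivity) hvol
      _ = (lam * s) ^ (k + 1) / (k + 1) ! := by rw [mul_pow, mul_div_assoc]

theorem Measurable.intervalIntegrable_of_norm_le {f : ℝ → ℝ} (hf : Measurable f) {a b C : ℝ}
    (hab : a ≤ b) (hC : ∀ x ∈ Icc a b, ‖f x‖ ≤ C) : IntervalIntegrable f volume a b :=
  intervalIntegrable_const.mono_fun' hf.aestronglyMeasurable <|
    ae_restrict_of_forall_mem measurableSet_uIoc fun x hx =>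
      hC x (Ioc_subset_Icc_self (uIoc_of_le hab ▸ hx))

theorem HasSum.hasSum_sub_succ {G : Type*} [AddCommGroup G] [TopologicalSpace G]
    [IsTopologicalAddGroup G] {f : ℕ → G} {a : G} (h : HasSum f a) :
    HasSum (fun n => f n - f (n + 1)) (f 0) := by
  simpa using h.sub ((hasSum_nat_add_iff' 1).2 h)

/-- One has `a_k → 0` as `k → ∞`, and
`Σ_{m=1}^∞ [a_{m−1} − a_m − e^{−λ̄ s}·(1/(m−1)!)·(λ̄ ∫₀^s (1−ψ̃(τ))dτ)^{m−1}]
  = 1 − exp(−∫₀^s λ̄ ψ̃(τ) dτ)`. -/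
theorem aSeq_tendsto_zero_and_sum (ψ : ℝ → ℝ) (lam s : ℝ)
    (hlam : 0 < lam) (hs : 0 < s) (hψ : Measurable ψ)
    (hψ01 : ∀ x ∈ Set.Icc (0 : ℝ) s, ψ x ∈ Set.Icc (0 : ℝ) 1) :
    Filter.Tendsto (aSeq ψ lam s) Filter.atTop (nhds 0) ∧
    HasSum
      (fun m : ℕ => aSeq ψ lam s m - aSeq ψ lam s (m + 1) -
        Real.exp (-lam * s) * (1 / (m.factorial : ℝ)) *
          (lam * ∫ τ in (0 : ℝ)..s, (1 - ψ τ)) ^ m)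
      (1 - Real.exp (-∫ τ in (0 : ℝ)..s, lam * ψ τ)) := by
  have hsum : Summable (aSeq ψ lam s) :=
    (Real.summable_pow_div_factorial (lam * s)).of_norm_bounded (norm_aSeq_le hlam.le hs.le hψ01)
  refine ⟨hsum.tendsto_atTop_zero, ?_⟩
  have htelescope : HasSum (fun m => aSeq ψ lam s m - aSeq ψ lam s (m + 1)) 1 :=
    hsum.hasSum.hasSum_sub_succ
  have hψi : IntervalIntegrable ψ volume 0 s :=
    hψ.intervalIntegrable_of_norm_le hs.le fun x hx => by
      rw [Real.norm_eq_abs, abs_le]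
      exact ⟨by linarith [(hψ01 x hx).1], (hψ01 x hx).2⟩
  set x := lam * ∫ τ in (0 : ℝ)..s, (1 - ψ τ) with hx
  have hexponent : -lam * s + x = -∫ τ in (0 : ℝ)..s, lam * ψ τ := by
    rw [hx, integral_sub intervalIntegrable_const hψi, intervalIntegral.integral_const_mul]
    simp only [intervalIntegral.integral_const, smul_eq_mul, mul_one]
    ring
  have hexp := (NormedSpace.expSeries_div_hasSum_exp x).mul_left (Real.exp (-lam * s))
  rw [← Real.exp_eq_exp_ℝ, ← Real.exp_add, hexponent] at hexp
  exact (htelescope.sub hexp).congr_fun fun m => by ring
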